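/- arXiv:2406.10805 — 4 statements merged into one kernel-verified Lean document; each statement's English description precedes it below -/
import Mathlib

section
/- For every μ > 0 and every real x with 0 ≤ x < μ, the cumulative distribution function satisfies G(x) = 1 + e^{-μ}/(2μ) - (e^{-x}/(2μ))(x + μ + 1). -/
open MeasureTheory Real

noncomputable def g (μ : ℝ) (x : ℝ) : ℝ :=
  if x < -μ then 0
  else if x < μ then Real.exp (-|x|) * (x / (2 * μ) + 1 / 2)
  else Real.exp (-x)

noncomputable def G (μ : ℝ) (x : ℝ) : ℝ := ∫ t in Set.Iic x, g μ t

/-! The density vanishes left of `-μ` and on `[-μ, x]` is `e^{-|t|}` times an affine function of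
`t`. Splitting at `0`, the pieces `e^{t}(a t + b)` and `e^{-t}(a t + b)` have the primitives
`e^{t}(a t + b - a)` and `-e^{-t}(a t + b + a)`. -/

open Set intervalIntegral

theorem integral_exp_mul_affine (a b u v : ℝ) :
    ∫ t in u..v, exp t * (a * t + b) = exp v * (a * v + b - a) - exp u * (a * u + b - a) := by
  have hderiv (t : ℝ) :
      HasDerivAt (fun t => exp t * (a * t + b - a)) (exp t * (a * t + b)) t :=
    ((hasDerivAt_exp t).mul (((hasDerivAt_id' t).const_mul a).add_const b |>.sub_const a))
      |>.congr_deriv (by ring)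
  exact integral_eq_sub_of_hasDerivAt (fun t _ => hderiv t)
    ((by fun_prop : Continuous fun t => exp t * (a * t + b)).intervalIntegrable u v)

theorem integral_exp_neg_mul_affine (a b u v : ℝ) :
    ∫ t in u..v, exp (-t) * (a * t + b) =
      exp (-u) * (a * u + b + a) - exp (-v) * (a * v + b + a) := by
  have hderiv (t : ℝ) :
      HasDerivAt (fun t => -(exp (-t) * (a * t + b + a))) (exp (-t) * (a * t + b)) t :=
    ((hasDerivAt_neg' t).exp.mul (((hasDerivAt_id' t).const_mul a).add_const b |>.add_const a)).neg
      |>.congr_deriv (by ring)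
  rw [integral_eq_sub_of_hasDerivAt (fun t _ => hderiv t)
    ((by fun_prop : Continuous fun t => exp (-t) * (a * t + b)).intervalIntegrable u v)]
  ring

theorem G_eq_intervalIntegral {μ x : ℝ} (hx : -μ ≤ x) (hxμ : x < μ) :
    G μ x = ∫ t in (-μ)..x, exp (-|t|) * (t / (2 * μ) + 1 / 2) := by
  have hg_left : EqOn (g μ) (fun _ => 0) (Iio (-μ)) := fun t ht => if_pos ht
  have hg_mid : EqOn (g μ) (fun t => exp (-|t|) * (t / (2 * μ) + 1 / 2)) (Icc (-μ) x) :=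
    fun t ht => by simp only [g, if_neg (not_lt.2 ht.1), if_pos (ht.2.trans_lt hxμ)]
  have hint_left : IntegrableOn (g μ) (Iio (-μ)) :=
    integrableOn_zero.congr_fun hg_left.symm measurableSet_Iio
  have hint_mid : IntegrableOn (g μ) (Icc (-μ) x) :=
    (by fun_prop : Continuous fun t => exp (-|t|) * (t / (2 * μ) + 1 / 2)).integrableOn_Icc
      |>.congr_fun hg_mid.symm measurableSet_Icc
  rw [G, ← Iio_union_Icc_eq_Iic hx,
    setIntegral_union ((Iio_disjoint_Ici le_rfl).mono_right Icc_subset_Ici_self) measurableSet_Icc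
      hint_left hint_mid,
    setIntegral_congr_fun measurableSet_Iio hg_left, setIntegral_congr_fun measurableSet_Icc hg_mid,
    integral_zero, zero_add, integral_Icc_eq_integral_Ioc, integral_of_le hx]

theorem sslud_cdf_mid_general (μ : ℝ) (x : ℝ) (h1 : 0 ≤ x) (h2 : x < μ) :
    G μ x = 1 + Real.exp (-μ) / (2 * μ) - Real.exp (-x) / (2 * μ) * (x + μ + 1) := by
  have hμ : 0 < μ := h1.trans_lt h2
  have hcont : Continuous fun t => exp (-|t|) * (t / (2 * μ) + 1 / 2) := by fun_prop
  have hleft : ∫ t in (-μ)..0, exp (-|t|) * (t / (2 * μ) + 1 / 2) =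
      ∫ t in (-μ)..0, exp t * ((2 * μ)⁻¹ * t + 1 / 2) := by
    refine integral_congr fun t ht => ?_
    rw [uIcc_of_le (by linarith), mem_Icc] at ht
    rw [abs_of_nonpos ht.2, neg_neg, div_eq_inv_mul]
  have hright : ∫ t in (0 : ℝ)..x, exp (-|t|) * (t / (2 * μ) + 1 / 2) =
      ∫ t in (0 : ℝ)..x, exp (-t) * ((2 * μ)⁻¹ * t + 1 / 2) := by
    refine integral_congr fun t ht => ?_
    rw [uIcc_of_le h1, mem_Icc] at ht
    rw [abs_of_nonneg ht.1, div_eq_inv_mul]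
  rw [G_eq_intervalIntegral (by linarith) h2,
    ← integral_add_adjacent_intervals (hcont.intervalIntegrable (-μ) 0)
      (hcont.intervalIntegrable 0 x),
    hleft, hright, integral_exp_mul_affine, integral_exp_neg_mul_affine]
  rw [neg_zero, exp_zero]
  field_simp
  ring

theorem sslud_cdf_mid (μ : ℝ) (hμ : 0 < μ) (x : ℝ) (h1 : 0 ≤ x) (h2 : x < μ) :
    G μ x = 1 + Real.exp (-μ) / (2 * μ) - Real.exp (-x) / (2 * μ) * (x + μ + 1) :=
  sslud_cdf_mid_general μ x h1 h2
end

section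
/- For every μ > 0 and every real x with x ≥ μ, the cumulative distribution function satisfies G(x) = 1 - e^{-x}. -/
open MeasureTheory Real

/-!
The density is the Laplace density `e^{-|t|}` skewed by the clamped linear factor
`w t = max 0 (min 1 (t / (2μ) + 1/2))`, which satisfies `w t + w (-t) = 1`. Hence
`g t + g (-t) = e^{-|t|}` for every `t`. As `g` vanishes below `-μ`, for `x ≥ μ` the
integral over `(-∞, x]` is the integral over `[-x, x]`, which folds onto `[0, x]` as
`∫₀ˣ e^{-t} dt = 1 - e^{-x}`.
-/

theorem intervalIntegral.integral_symmetric_eq_integral_add_comp_neg {E : Type*}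
    [NormedAddCommGroup E] [NormedSpace ℝ E] {f : ℝ → E} {a : ℝ}
    (hf : IntervalIntegrable f volume (-a) a) :
    ∫ t in -a..a, f t = ∫ t in 0..a, (f t + f (-t)) := by
  have hzero : (0 : ℝ) ∈ Set.uIcc (-a) a := by
    rcases le_total 0 a with h | h <;> simp [h]
  have hleft : IntervalIntegrable f volume (-a) 0 :=
    hf.mono_set (Set.uIcc_subset_uIcc_left hzero)
  have hright : IntervalIntegrable f volume 0 a :=
    hf.mono_set (Set.uIcc_subset_uIcc_right hzero)
  have hleft_neg : IntervalIntegrable (fun t ↦ f (-t)) volume 0 a := by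
    simpa using ((IntervalIntegrable.iff_comp_neg).mp hleft).symm
  rw [← intervalIntegral.integral_add_adjacent_intervals hleft hright,
    intervalIntegral.integral_add hright hleft_neg, add_comm,
    intervalIntegral.integral_comp_neg, neg_zero]

lemma max_zero_min_one_add_half_add_max_zero_min_one_neg_add_half (s : ℝ) :
    max 0 (min 1 (s + 1 / 2)) + max 0 (min 1 (-s + 1 / 2)) = 1 := by
  rcases le_total s (-1 / 2) with h | h <;> rcases le_total s (1 / 2) with h' | h' <;>
    simp only [max_def, min_def] <;> split_ifs <;> linarith

section SkewSymmetric

variable {μ : ℝ} (hμ : 0 < μ)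
include hμ

lemma g_eq_exp_mul_max_min (t : ℝ) :
    g μ t = exp (-|t|) * max 0 (min 1 (t / (2 * μ) + 1 / 2)) := by
  have h2μ : 0 < 2 * μ := by positivity
  unfold g
  split_ifs with hlow hhigh
  · have hw : t / (2 * μ) < -1 / 2 := (div_lt_iff₀ h2μ).2 (by linarith)
    rw [max_eq_left (min_le_of_right_le (by linarith)), mul_zero]
  · have hw0 : -1 / 2 ≤ t / (2 * μ) := (le_div_iff₀ h2μ).2 (by linarith)
    have hw1 : t / (2 * μ) < 1 / 2 := (div_lt_iff₀ h2μ).2 (by linarith)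
    rw [min_eq_right (by linarith), max_eq_right (by linarith)]
  · have hw : 1 / 2 ≤ t / (2 * μ) := (le_div_iff₀ h2μ).2 (by linarith)
    rw [abs_of_nonneg (by linarith), min_eq_left (by linarith), max_eq_right zero_le_one,
      mul_one]

lemma continuous_g : Continuous (g μ) := by
  rw [funext (g_eq_exp_mul_max_min hμ)]
  fun_prop

lemma g_eq_zero_of_le {t : ℝ} (ht : t ≤ -μ) : g μ t = 0 := by
  have hw : t / (2 * μ) ≤ -1 / 2 := (div_le_iff₀ (by positivity)).2 (by linarith)
  rw [g_eq_exp_mul_max_min hμ, max_eq_left (min_le_of_right_le (by linarith)), mul_zero]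

lemma g_add_g_neg (t : ℝ) : g μ t + g μ (-t) = exp (-|t|) := by
  rw [g_eq_exp_mul_max_min hμ, g_eq_exp_mul_max_min hμ, abs_neg, ← mul_add, neg_div,
    max_zero_min_one_add_half_add_max_zero_min_one_neg_add_half, mul_one]

end SkewSymmetric

theorem sslud_cdf_tail (μ : ℝ) (hμ : 0 < μ) (x : ℝ) (h : μ ≤ x) :
    G μ x = 1 - Real.exp (-x) := by
  have hx : 0 ≤ x := hμ.le.trans h
  calc G μ x = ∫ t in Set.Ioc (-x) x, g μ t :=
        setIntegral_eq_of_subset_of_forall_sdiff_eq_zero measurableSet_Iic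
          Set.Ioc_subset_Iic_self fun t ⟨htx, ht_notin⟩ ↦ g_eq_zero_of_le hμ <| by
            have : t ≤ -x := not_lt.mp fun hxt ↦ ht_notin ⟨hxt, htx⟩
            linarith
    _ = ∫ t in -x..x, g μ t := (intervalIntegral.integral_of_le (by linarith)).symm
    _ = ∫ t in 0..x, exp (-|t|) := by
      rw [intervalIntegral.integral_symmetric_eq_integral_add_comp_neg
        ((continuous_g hμ).intervalIntegrable _ _)]
      simp only [g_add_g_neg hμ]
    _ = ∫ t in 0..x, exp (-t) := intervalIntegral.integral_congr fun t ht ↦ by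
      rw [Set.uIcc_of_le hx] at ht
      rw [abs_of_nonneg ht.1]
    _ = 1 - exp (-x) := by simp [intervalIntegral.integral_comp_neg]
end

section
/- For every μ > 0 and every real t with t < 1 and t ≠ -1, the moment generating function of SSLUD(μ) satisfies ∫_{ℝ} e^{t x} g(x) dx = (1/(2μ)) [ (-1 + e^{-μ(1+t)})/(1+t)^2 + (1 - e^{-μ(1-t)})/(1-t)^2 ] + 1/(1 - t^2). -/
open MeasureTheory Real

/-! On `[-μ, μ]` the density is `e^{-|x|}` times the ramp `x / (2μ) + 1/2`, and beyond `μ` it is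
`e^{-x}`. Hence the MGF is the sum of `∫_{-μ}^0 e^{(1+t)x}(px+q)` and `∫_0^μ e^{(t-1)x}(px+q)`,
computed with the antiderivative `e^{cx}((px+q)/c - p/c²)`, and the tail `∫_μ^∞ e^{(t-1)x}`. -/

open Set intervalIntegral

lemma hasDerivAt_exp_mul_mul_affine {c : ℝ} (hc : c ≠ 0) (p q x : ℝ) :
    HasDerivAt (fun y => exp (c * y) * ((p * y + q) / c - p / c ^ 2))
      (exp (c * x) * (p * x + q)) x := by
  have h_exp : HasDerivAt (fun y => exp (c * y)) (exp (c * x) * c) x := by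
    simpa using ((hasDerivAt_id x).const_mul c).exp
  have h_affine : HasDerivAt (fun y => (p * y + q) / c - p / c ^ 2) (p / c) x := by
    simpa using ((((hasDerivAt_id x).const_mul p).add_const q).div_const c).sub_const (p / c ^ 2)
  refine (h_exp.mul h_affine).congr_deriv ?_
  field_simp
  ring

lemma integral_exp_mul_mul_affine {c : ℝ} (hc : c ≠ 0) (p q a b : ℝ) :
    ∫ x in a..b, exp (c * x) * (p * x + q) =
      exp (c * b) * ((p * b + q) / c - p / c ^ 2) - exp (c * a) * ((p * a + q) / c - p / c ^ 2) :=
  integral_eq_sub_of_hasDerivAt (fun x _ => hasDerivAt_exp_mul_mul_affine hc p q x)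
    ((by fun_prop : Continuous fun x => exp (c * x) * (p * x + q)).intervalIntegrable _ _)

lemma g_of_lt {μ x : ℝ} (hx : x < -μ) : g μ x = 0 := by
  simp [g, hx]

lemma g_of_mem_Icc {μ x : ℝ} (hμ : μ ≠ 0) (hx : x ∈ Icc (-μ) μ) :
    g μ x = exp (-|x|) * ((2 * μ)⁻¹ * x + 1 / 2) := by
  rcases hx.2.lt_or_eq with hlt | rfl
  · simp [g, hx.1.not_gt, hlt, div_eq_inv_mul]
  · have : ¬ x < -x := by linarith [hx.1]
    simp only [g, this, lt_irrefl, if_false, abs_of_nonneg (show 0 ≤ x by linarith [hx.1])]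
    field_simp
    ring

lemma g_of_le {μ x : ℝ} (hμ : 0 ≤ μ) (hx : μ ≤ x) : g μ x = exp (-x) := by
  simp [g, hx.not_gt, show ¬ x < -μ by linarith]

lemma exp_mul_g_eqOn_Icc_nonpos {μ : ℝ} (hμ : 0 < μ) (t : ℝ) :
    EqOn (fun x => exp (t * x) * g μ x) (fun x => exp ((1 + t) * x) * ((2 * μ)⁻¹ * x + 1 / 2))
      (Icc (-μ) 0) := by
  intro x hx
  simp only [g_of_mem_Icc hμ.ne' ⟨hx.1, hx.2.trans hμ.le⟩, abs_of_nonpos hx.2, neg_neg,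
    ← mul_assoc, ← exp_add]
  ring_nf

lemma exp_mul_g_eqOn_Icc_nonneg {μ : ℝ} (hμ : 0 < μ) (t : ℝ) :
    EqOn (fun x => exp (t * x) * g μ x) (fun x => exp ((t - 1) * x) * ((2 * μ)⁻¹ * x + 1 / 2))
      (Icc 0 μ) := by
  intro x hx
  simp only [g_of_mem_Icc hμ.ne' ⟨(neg_nonpos.2 hμ.le).trans hx.1, hx.2⟩, abs_of_nonneg hx.1,
    ← mul_assoc, ← exp_add]
  ring_nf

lemma exp_mul_g_eqOn_Ici {μ : ℝ} (hμ : 0 < μ) (t : ℝ) :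
    EqOn (fun x => exp (t * x) * g μ x) (fun x => exp ((t - 1) * x)) (Ici μ) := by
  intro x hx
  simp only [g_of_le hμ.le hx, ← exp_add]
  ring_nf

lemma integral_exp_mul_g_eq {μ t : ℝ} (hμ : 0 < μ) (ht : t < 1) :
    ∫ x, exp (t * x) * g μ x =
      (∫ x in -μ..0, exp ((1 + t) * x) * ((2 * μ)⁻¹ * x + 1 / 2))
        + (∫ x in 0..μ, exp ((t - 1) * x) * ((2 * μ)⁻¹ * x + 1 / 2))
        + ∫ x in Ioi μ, exp ((t - 1) * x) := by
  have h_left := exp_mul_g_eqOn_Icc_nonpos hμ t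
  have h_right := exp_mul_g_eqOn_Icc_nonneg hμ t
  have h_tail := (exp_mul_g_eqOn_Ici hμ t).mono Ioi_subset_Ici_self
  have hi_left : IntervalIntegrable (fun x => exp (t * x) * g μ x) volume (-μ) 0 :=
    ((Continuous.continuousOn (by fun_prop)).congr h_left).intervalIntegrable_of_Icc (by linarith)
  have hi_right : IntervalIntegrable (fun x => exp (t * x) * g μ x) volume 0 μ :=
    ((Continuous.continuousOn (by fun_prop)).congr h_right).intervalIntegrable_of_Icc hμ.le
  have hi_tail : IntegrableOn (fun x => exp (t * x) * g μ x) (Ioi μ) :=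
    (integrableOn_exp_mul_Ioi (by linarith) μ).congr_fun h_tail.symm measurableSet_Ioi
  calc ∫ x, exp (t * x) * g μ x
      = ∫ x in Ioi (-μ), exp (t * x) * g μ x := by
        rw [← integral_Ici_eq_integral_Ioi, setIntegral_eq_integral_of_forall_compl_eq_zero]
        intro x hx
        rw [g_of_lt (not_le.1 hx), mul_zero]
    _ = (∫ x in -μ..0, exp (t * x) * g μ x) + (∫ x in 0..μ, exp (t * x) * g μ x)
          + ∫ x in Ioi μ, exp (t * x) * g μ x := by
        rw [integral_add_adjacent_intervals hi_left hi_right,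
          integral_interval_add_Ioi' (hi_left.trans hi_right) hi_tail]
    _ = _ := by
        rw [integral_congr (h_left.mono (uIcc_of_le (by linarith)).subset),
          integral_congr (h_right.mono (uIcc_of_le hμ.le).subset),
          setIntegral_congr_fun measurableSet_Ioi h_tail]

theorem sslud_mgf (μ : ℝ) (hμ : 0 < μ) (t : ℝ) (ht : t < 1) (ht' : t ≠ -1) :
    (∫ x : ℝ, Real.exp (t * x) * g μ x) =
      (1 / (2 * μ)) * ((-1 + Real.exp (-μ * (1 + t))) / (1 + t) ^ 2
        + (1 - Real.exp (-μ * (1 - t))) / (1 - t) ^ 2) + 1 / (1 - t ^ 2) := by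
  have h_plus : 1 + t ≠ 0 := fun h => ht' (by linarith)
  have h_minus : 1 - t ≠ 0 := by linarith
  have h_neg : t - 1 < 0 := by linarith
  have h_neg' : t - 1 ≠ 0 := h_neg.ne
  have h_sq : 1 - t ^ 2 ≠ 0 := by
    rw [show 1 - t ^ 2 = (1 - t) * (1 + t) by ring]
    exact mul_ne_zero h_minus h_plus
  rw [integral_exp_mul_g_eq hμ ht, integral_exp_mul_mul_affine h_plus,
    integral_exp_mul_mul_affine h_neg', integral_exp_mul_Ioi h_neg,
    show (1 + t) * -μ = -μ * (1 + t) by ring, show (t - 1) * μ = -μ * (1 - t) by ring]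
  simp only [mul_zero, exp_zero]
  field_simp
  ring
end

section
/- For every μ > 0, the first raw moment of SSLUD(μ) satisfies ∫_{ℝ} x · g(x) dx = 2/μ - (1 + 2/μ) e^{-μ}. -/
open MeasureTheory Real

/-!
On `[-μ, μ]`, pairing `x` with `-x` cancels the odd part `x e^{-|x|} / 2` of `x g(x)` and doubles
the even part, so the middle contributes `(1/μ) ∫₀^μ x² e^{-x} dx`; the tail contributes
`∫_μ^∞ x e^{-x} dx`. Both have elementary antiderivatives, `-(x² + 2x + 2) e^{-x}` and
`-(x + 1) e^{-x}`.
-/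

open Set Filter Topology Asymptotics

theorem intervalIntegral.integral_neg_self_eq_integral_add_comp_neg {E : Type*}
    [NormedAddCommGroup E] [NormedSpace ℝ E] {f : ℝ → E} {a : ℝ}
    (hf : IntervalIntegrable f volume (-a) a) :
    ∫ x in -a..a, f x = ∫ x in 0..a, (f x + f (-x)) := by
  have hleft : IntervalIntegrable f volume (-a) 0 :=
    hf.mono_set (uIcc_subset_uIcc_left (by simp [uIcc, le_total]))
  have hright : IntervalIntegrable f volume 0 a :=
    hf.mono_set (uIcc_subset_uIcc_right (by simp [uIcc, le_total]))
  have hneg : IntervalIntegrable (fun x => f (-x)) volume 0 a := by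
    simpa using (IntervalIntegrable.iff_comp_neg).mp hleft.symm
  rw [← integral_add_adjacent_intervals hleft hright, integral_add hright hneg,
    integral_comp_neg, neg_zero, add_comm]

theorem integrableOn_Ioi_mul_exp_neg (a : ℝ) :
    IntegrableOn (fun x : ℝ => x * exp (-x)) (Ioi a) := by
  refine integrable_of_isBigO_exp_neg one_half_pos (by fun_prop) ?_
  have h := (isLittleO_pow_exp_pos_mul_atTop 1 one_half_pos).isBigO.mul
    (isBigO_refl (fun x : ℝ => exp (-x)) atTop)
  refine h.congr_left (fun x => by simp) |>.congr_right (fun x => ?_)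
  rw [← exp_add]
  ring_nf

theorem integral_Ioi_mul_exp_neg (a : ℝ) :
    ∫ x in Ioi a, x * exp (-x) = (a + 1) * exp (-a) := by
  have hderiv (x : ℝ) : HasDerivAt (fun y => -(y + 1) * exp (-y)) (x * exp (-x)) x := by
    refine (((hasDerivAt_id' x).add_const 1).neg.mul (hasDerivAt_neg' x).exp).congr_deriv ?_
    simp only [Pi.neg_apply]
    ring
  have hlim : Tendsto (fun y : ℝ => -(y + 1) * exp (-y)) atTop (𝓝 0) := by
    have := ((tendsto_pow_mul_exp_neg_atTop_nhds_zero 1).add tendsto_exp_neg_atTop_nhds_zero).neg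
    simpa [add_mul] using this
  rw [integral_Ioi_of_hasDerivAt_of_tendsto' (fun x _ => hderiv x)
    (integrableOn_Ioi_mul_exp_neg a) hlim]
  ring

theorem integral_sq_mul_exp_neg (a : ℝ) :
    ∫ x in 0..a, x ^ 2 * exp (-x) = 2 - (a ^ 2 + 2 * a + 2) * exp (-a) := by
  have hderiv (x : ℝ) :
      HasDerivAt (fun y => -(y ^ 2 + 2 * y + 2) * exp (-y)) (x ^ 2 * exp (-x)) x := by
    refine ((((hasDerivAt_pow 2 x).add ((hasDerivAt_id' x).const_mul 2)).add_const 2).neg.mul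
      (hasDerivAt_neg' x).exp).congr_deriv ?_
    simp only [Pi.neg_apply, Pi.add_apply]
    ring
  have hcont : Continuous fun x : ℝ => x ^ 2 * exp (-x) := by fun_prop
  rw [intervalIntegral.integral_eq_sub_of_hasDerivAt (fun x _ => hderiv x)
    (hcont.intervalIntegrable 0 a)]
  simp only [neg_zero, exp_zero]
  ring

theorem g_of_le_neg {μ x : ℝ} (hμ : 0 < μ) (hx : x ≤ -μ) : g μ x = 0 := by
  rcases hx.lt_or_eq with hx | rfl
  · simp [g, hx]
  · rw [g, if_neg (lt_irrefl _), if_pos (by linarith)]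
    field_simp
    ring

theorem g_of_mem_Ioc {μ x : ℝ} (hμ : 0 < μ) (hx : x ∈ Ioc (-μ) μ) :
    g μ x = exp (-|x|) * (x / (2 * μ) + 1 / 2) := by
  rcases hx.2.lt_or_eq with hxμ | rfl
  · simp [g, hx.1.not_gt, hxμ]
  · rw [g, if_neg (by linarith), if_neg (lt_irrefl x), abs_of_pos hμ]
    field_simp
    ring

theorem g_of_gt {μ x : ℝ} (hμ : 0 ≤ μ) (hx : μ < x) : g μ x = exp (-x) := by
  simp [g, (by linarith : ¬ x < -μ), hx.not_gt]

theorem mul_g_eq_indicator {μ : ℝ} (hμ : 0 < μ) (x : ℝ) :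
    x * g μ x =
      (Ioc (-μ) μ).indicator (fun x => x * (exp (-|x|) * (x / (2 * μ) + 1 / 2))) x
        + (Ioi μ).indicator (fun x => x * exp (-x)) x := by
  rcases le_or_gt x (-μ) with hx | hx
  · simp [g_of_le_neg hμ hx, hx.not_gt, (by linarith : x ≤ μ).not_gt]
  rcases le_or_gt x μ with hx' | hx'
  · simp [g_of_mem_Ioc hμ ⟨hx, hx'⟩, hx, hx', hx'.not_gt]
  · simp [g_of_gt hμ.le hx', hx'.not_ge, indicator_of_mem (mem_Ioi.2 hx')]

theorem integral_mul_exp_neg_abs_mul_add_half {μ : ℝ} (hμ : 0 ≤ μ) :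
    ∫ x in -μ..μ, x * (exp (-|x|) * (x / (2 * μ) + 1 / 2))
      = (2 - (μ ^ 2 + 2 * μ + 2) * exp (-μ)) / μ := by
  rw [intervalIntegral.integral_neg_self_eq_integral_add_comp_neg
    ((by fun_prop : Continuous _).intervalIntegrable _ _)]
  have hsymm : ∀ x ∈ uIcc 0 μ, x * (exp (-|x|) * (x / (2 * μ) + 1 / 2))
      + -x * (exp (-|-x|) * (-x / (2 * μ) + 1 / 2)) = x ^ 2 * exp (-x) / μ := by
    intro x hx
    rw [abs_neg, abs_of_nonneg (uIcc_of_le hμ ▸ hx).1]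
    ring
  rw [intervalIntegral.integral_congr hsymm, intervalIntegral.integral_div, integral_sq_mul_exp_neg]

theorem sslud_first_moment (μ : ℝ) (hμ : 0 < μ) :
    (∫ x : ℝ, x * g μ x) = 2 / μ - (1 + 2 / μ) * Real.exp (-μ) := by
  have hmid : IntegrableOn (fun x : ℝ => x * (exp (-|x|) * (x / (2 * μ) + 1 / 2)))
      (Ioc (-μ) μ) := (by fun_prop : Continuous _).integrableOn_Ioc
  simp only [mul_g_eq_indicator hμ]
  rw [integral_add ((integrable_indicator_iff measurableSet_Ioc).2 hmid)
      ((integrable_indicator_iff measurableSet_Ioi).2 (integrableOn_Ioi_mul_exp_neg μ)),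
    integral_indicator measurableSet_Ioc,
    integral_indicator measurableSet_Ioi, ← intervalIntegral.integral_of_le (by linarith),
    integral_mul_exp_neg_abs_mul_add_half hμ.le, integral_Ioi_mul_exp_neg]
  field_simp
  ring
end
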